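/- arXiv:1506.05411 — 4 statements merged into one kernel-verified Lean document; each statement's English description precedes it below -/
import Mathlib

section
/- For every nonzero Gaussian integer z, the sum over all divisors (up to associates) of z of the reciprocal of the fourth power of their absolute values is strictly less than ζ(2)² = π⁴/36. -/
/-!
Every nonzero Gaussian integer has exactly one associate `a + b i` with `a ≥ 1`, `b ≥ 0`, and
`a² + b² ≥ a (b + 1)`. Distinct associate classes give distinct pairs `(a, b + 1)`, so the sum is
bounded by a finite part of `∑_{m, n ≥ 1} 1 / (m n)² = ζ(2)²`, and the bound is strict since every
term of that double series is positive.
-/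

open Real

theorem sum_lt_of_hasSum {ι α : Type*} [Infinite ι] [AddCommMonoid α] [PartialOrder α]
    [IsOrderedAddMonoid α] [AddLeftStrictMono α] [TopologicalSpace α] [OrderClosedTopology α]
    {f : ι → α} {a : α} (hf : HasSum f a) (hpos : ∀ i, 0 < f i) (s : Finset ι) :
    ∑ i ∈ s, f i < a := by
  classical
  obtain ⟨j, hj⟩ := Infinite.exists_notMem_finset s
  calc ∑ i ∈ s, f i < f j + ∑ i ∈ s, f i := lt_add_of_pos_left _ (hpos j)
    _ = ∑ i ∈ insert j s, f i := (Finset.sum_insert hj).symm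
    _ ≤ a := sum_le_hasSum _ (fun i _ => (hpos i).le) hf

theorem sum_mul_lt_of_hasSum {ι κ : Type*} [Infinite ι] [Infinite κ] {f : ι → ℝ} {g : κ → ℝ}
    {a b : ℝ} (hf : HasSum f a) (hg : HasSum g b) (hf0 : ∀ i, 0 < f i) (hg0 : ∀ k, 0 < g k)
    (T : Finset (ι × κ)) : ∑ p ∈ T, f p.1 * g p.2 < a * b := by
  classical
  have hT : T ⊆ T.image Prod.fst ×ˢ T.image Prod.snd := fun p hp =>
    Finset.mem_product.2 ⟨Finset.mem_image_of_mem _ hp, Finset.mem_image_of_mem _ hp⟩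
  calc ∑ p ∈ T, f p.1 * g p.2
      ≤ ∑ p ∈ T.image Prod.fst ×ˢ T.image Prod.snd, f p.1 * g p.2 :=
        Finset.sum_le_sum_of_subset_of_nonneg hT fun p _ _ => (mul_pos (hf0 _) (hg0 _)).le
    _ = (∑ i ∈ T.image Prod.fst, f i) * ∑ k ∈ T.image Prod.snd, g k :=
        (Finset.sum_product ..).trans (Finset.sum_mul_sum ..).symm
    _ < a * b := mul_lt_mul'' (sum_lt_of_hasSum hf hf0 _) (sum_lt_of_hasSum hg hg0 _)
        (Finset.sum_nonneg fun i _ => (hf0 i).le) (Finset.sum_nonneg fun k _ => (hg0 k).le)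

theorem hasSum_one_div_succ_sq : HasSum (fun n : ℕ => 1 / ((n : ℝ) + 1) ^ 2) (π ^ 2 / 6) := by
  simpa using (hasSum_nat_add_iff' 1).mpr hasSum_zeta_two

namespace GaussianInt

theorem exists_associated_re_pos_im_nonneg {x : GaussianInt} (hx : x ≠ 0) :
    ∃ y, Associated x y ∧ 0 < y.re ∧ 0 ≤ y.im := by
  have hI : IsUnit (Zsqrtd.sqrtd : GaussianInt) :=
    IsUnit.of_mul_eq_one (-Zsqrtd.sqrtd) (by ext <;> simp)
  have hx' : x.re ≠ 0 ∨ x.im ≠ 0 := by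
    by_contra! h
    exact hx (Zsqrtd.ext h.1 h.2)
  suffices ∃ k : ℕ, 0 < (x * Zsqrtd.sqrtd ^ k).re ∧ 0 ≤ (x * Zsqrtd.sqrtd ^ k).im by
    obtain ⟨k, hk⟩ := this
    exact ⟨_, associated_mul_unit_right x _ (hI.pow k), hk⟩
  by_cases h0 : 0 < x.re ∧ 0 ≤ x.im
  · exact ⟨0, by simpa using h0⟩
  by_cases h1 : 0 ≤ x.re ∧ x.im < 0
  · exact ⟨1, by simp [pow_succ]; omega⟩
  by_cases h2 : x.re < 0 ∧ x.im ≤ 0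
  · exact ⟨2, by simp [pow_succ]; omega⟩
  · exact ⟨3, by simp [pow_succ]; omega⟩

-- Shifted by one in the real part so that it indexes the series `hasSum_one_div_succ_sq`.
def quadrantIndex (y : GaussianInt) : ℕ × ℕ := ((y.re - 1).toNat, y.im.toNat)

theorem quadrantIndex_injOn : Set.InjOn quadrantIndex {y | 0 < y.re ∧ 0 ≤ y.im} := by
  rintro x ⟨hx1, hx2⟩ y ⟨hy1, hy2⟩ h
  simp only [quadrantIndex, Prod.ext_iff] at h
  ext <;> omega

theorem re_mul_im_add_one_le_norm {y : GaussianInt} (hre : 0 < y.re) (him : 0 ≤ y.im) :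
    y.re * (y.im + 1) ≤ y.norm := by
  rw [Zsqrtd.norm_def]
  rcases him.eq_or_lt with h | h
  · rw [← h]; nlinarith
  · nlinarith [sq_nonneg (y.re - y.im), mul_le_mul_of_nonneg_left h hre.le]

theorem one_div_norm_sq_le {y : GaussianInt} (hre : 0 < y.re) (him : 0 ≤ y.im) :
    1 / (y.norm : ℝ) ^ 2 ≤
      1 / (((quadrantIndex y).1 : ℝ) + 1) ^ 2 * (1 / (((quadrantIndex y).2 : ℝ) + 1) ^ 2) := by
  have h1 : ((quadrantIndex y).1 : ℝ) + 1 = y.re := by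
    simp only [quadrantIndex]; rw [← Int.cast_natCast, Int.toNat_of_nonneg (by omega)]; simp
  have h2 : ((quadrantIndex y).2 : ℝ) = y.im := by
    simp only [quadrantIndex]; rw [← Int.cast_natCast, Int.toNat_of_nonneg him]
  rw [one_div_mul_one_div, ← mul_pow]
  gcongr
  rw [h1, h2]
  exact_mod_cast re_mul_im_add_one_le_norm hre him

end GaussianInt

/-- For every nonzero Gaussian integer `z`, the sum over all divisors of `z`
(one per associate class) of the reciprocal of the fourth power of their
absolute values (i.e. `1 / N(x)^2`) is strictly less than `ζ(2)^2 = π^4/36`. -/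
theorem delta_neg_four_lt_zeta_two_sq (z : GaussianInt) (hz : z ≠ 0)
    (S : Finset GaussianInt) (hSdvd : ∀ y ∈ S, y ∣ z)
    (hS : ∀ x : GaussianInt, x ∣ z → ∃! y, y ∈ S ∧ Associated x y) :
    ∑ x ∈ S, 1 / ((Zsqrtd.norm x : ℝ)) ^ 2 < π ^ 4 / 36 := by
  have hS0 : ∀ x ∈ S, x ≠ 0 := fun x hx h0 => hz (zero_dvd_iff.mp (h0 ▸ hSdvd x hx))
  choose! r hr using fun x (hx : x ∈ S) =>
    GaussianInt.exists_associated_re_pos_im_nonneg (hS0 x hx)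
  set f : ℕ → ℝ := fun n => 1 / ((n : ℝ) + 1) ^ 2
  have hinj : Set.InjOn (fun x => (r x).quadrantIndex) S := by
    intro x hx y hy hxy
    have hrxy : r x = r y := GaussianInt.quadrantIndex_injOn
      ⟨(hr x hx).2.1, (hr x hx).2.2⟩ ⟨(hr y hy).2.1, (hr y hy).2.2⟩ hxy
    have hassoc : Associated x y := (hr x hx).1.trans (hrxy ▸ (hr y hy).1.symm)
    exact (hS x (hSdvd x hx)).unique ⟨hx, Associated.refl x⟩ ⟨hy, hassoc⟩
  have hbound : ∀ x ∈ S, 1 / (Zsqrtd.norm x : ℝ) ^ 2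
      ≤ f (r x).quadrantIndex.1 * f (r x).quadrantIndex.2 := by
    intro x hx
    obtain ⟨hassoc, hre, him⟩ := hr x hx
    rw [Zsqrtd.norm_eq_of_associated (by norm_num) hassoc]
    exact GaussianInt.one_div_norm_sq_le hre him
  calc ∑ x ∈ S, 1 / (Zsqrtd.norm x : ℝ) ^ 2
      ≤ ∑ x ∈ S, f (r x).quadrantIndex.1 * f (r x).quadrantIndex.2 := Finset.sum_le_sum hbound
    _ = ∑ p ∈ S.image (fun x => (r x).quadrantIndex), f p.1 * f p.2 := by
        rw [Finset.sum_image hinj]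
    _ < π ^ 2 / 6 * (π ^ 2 / 6) :=
        sum_mul_lt_of_hasSum hasSum_one_div_succ_sq hasSum_one_div_succ_sq
          (fun _ => by positivity) (fun _ => by positivity) _
    _ = π ^ 4 / 36 := by ring
end

section
/- There is no positive integer r that is perfect and all of whose prime factors are congruent to 2 modulo 3. -/
/-!
If every prime factor of `n` is `≡ -1 (mod 3)`, then `σ(p^k) = 1 + p + ⋯ + p^k` is `≡ 0` for odd
`k` and `≡ 1` for even `k`, in which case also `p^k ≡ 1`. Multiplicativity of `σ` then gives
`σ(n) ≡ 0`, or `σ(n) ≡ 1` and `n ≡ 1 (mod 3)`; in equational form, `s := σ(n)` satisfies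
`s² = s` and `s n = s` in `ZMod 3`. Since `3 ∤ n`, neither is compatible with `σ(n) = 2n`.
-/

open ArithmeticFunction Finset
open scoped ArithmeticFunction.sigma

section NegOneGeomSum

variable {R : Type*} [Ring R]

lemma isIdempotentElem_neg_one_geom_sum (n : ℕ) :
    IsIdempotentElem (∑ i ∈ range n, (-1 : R) ^ i) := by
  rw [neg_one_geom_sum]
  split_ifs
  exacts [IsIdempotentElem.zero, IsIdempotentElem.one]

lemma neg_one_geom_sum_mul_neg_one_pow (k : ℕ) :
    (∑ i ∈ range (k + 1), (-1 : R) ^ i) * (-1) ^ k = ∑ i ∈ range (k + 1), (-1 : R) ^ i := by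
  rcases Nat.even_or_odd k with hk | hk
  · rw [hk.neg_one_pow, mul_one]
  · rw [neg_one_geom_sum, if_pos (Nat.even_add_one.mpr (Nat.not_even_iff_odd.mpr hk)), zero_mul]

end NegOneGeomSum

theorem isIdempotentElem_sigma_one_and_mul_self {R : Type*} [CommRing R] {n : ℕ}
    (hn : ∀ p : ℕ, p.Prime → p ∣ n → (p : R) = -1) :
    IsIdempotentElem (σ 1 n : R) ∧ (σ 1 n : R) * n = σ 1 n := by
  induction n using Nat.recOnPosPrimePosCoprime with
  | zero => simp [IsIdempotentElem]
  | one => simp [IsIdempotentElem]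
  | prime_pow p k hp hk =>
    rw [sigma_one_apply_prime_pow hp]
    push_cast
    rw [hn p hp (dvd_pow_self p hk.ne')]
    exact ⟨isIdempotentElem_neg_one_geom_sum _, neg_one_geom_sum_mul_neg_one_pow k⟩
  | coprime a b _ _ hab iha ihb =>
    obtain ⟨ha, ha'⟩ := iha fun p hp hpa => hn p hp (hpa.mul_right b)
    obtain ⟨hb, hb'⟩ := ihb fun p hp hpb => hn p hp (hpb.mul_left a)
    rw [isMultiplicative_sigma.map_mul_of_coprime hab]
    push_cast
    refine ⟨ha.mul hb, ?_⟩
    rw [mul_mul_mul_comm, ha', hb']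

/-- There is no positive perfect integer all of whose prime factors are `≡ 2 (mod 3)`. -/
theorem no_perfect_all_primes_two_mod_three :
    ¬ ∃ r : ℕ, 0 < r ∧ Nat.Perfect r ∧ ∀ p : ℕ, p.Prime → p ∣ r → p % 3 = 2 := by
  rintro ⟨r, hr, hperf, hprimes⟩
  have hneg : ∀ p : ℕ, p.Prime → p ∣ r → (p : ZMod 3) = -1 := fun p hp hpr => by
    rw [← ZMod.natCast_mod, hprimes p hp hpr]
    decide
  have hr3 : (r : ZMod 3) ≠ 0 := fun h =>
    absurd (hprimes 3 Nat.prime_three ((ZMod.natCast_eq_zero_iff r 3).mp h)) (by norm_num)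
  have hσ : (σ 1 r : ZMod 3) = 2 * r := by
    rw [sigma_one_apply, (Nat.perfect_iff_sum_divisors_eq_two_mul hr).mp hperf]
    push_cast
    rfl
  obtain ⟨hidem, hmul⟩ := isIdempotentElem_sigma_one_and_mul_self hneg
  rw [IsIdempotentElem, hσ] at hidem
  rw [hσ] at hmul
  have no_unit_solution :
      ∀ x : ZMod 3, x ≠ 0 → 2 * x * (2 * x) = 2 * x → 2 * x * x = 2 * x → False := by
    decide
  exact no_unit_solution _ hr3 hidem hmul
end

section
/- If r is an odd perfect number with Eulerian form r = p^k · m² (p prime, p ≡ k ≡ 1 (mod 4), gcd(p,m)=1), then 3 does not divide σ(p^k)·σ(m²) when all prime divisors of r are ≡ 2 (mod 3); consequently no odd perfect number has all its prime factors ≡ 2 (mod 3). -/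
/-! For a perfect number `σ 1 r = 2 * r`, so `3 ∤ σ 1 r` as soon as `3 ∤ r`, which holds when every
prime factor of `r` is `≡ 2 (mod 3)`; by multiplicativity `σ(p^k) σ(m²) = σ(r)`.
For the second claim, `σ(r) = 2r` is even whereas `σ(q^a)` is odd for odd `q` and even `a`, so some
prime `q ∣ r` occurs to an odd power `a`. Then `σ(q^a) = 1 + q + ⋯ + q^a ≡ 1 - 1 + ⋯ - 1 = 0 (mod 3)`
divides `σ(r)`, a contradiction. -/

open ArithmeticFunction Finset
open scoped ArithmeticFunction.sigma

namespace ArithmeticFunction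

lemma IsMultiplicative.map_ordProj_dvd {R : Type*} [CommMonoidWithZero R]
    {f : ArithmeticFunction R} (hf : f.IsMultiplicative) {p : ℕ} (hp : p.Prime) {n : ℕ} (hn : n ≠ 0) :
    f (ordProj[p] n) ∣ f n := by
  conv_rhs => rw [← Nat.ordProj_mul_ordCompl_eq_self n p]
  rw [hf.map_mul_of_coprime ((Nat.coprime_ordCompl hp hn).pow_left _)]
  exact dvd_mul_right _ _

end ArithmeticFunction

namespace Nat

lemma Perfect.sigma_one_eq {n : ℕ} (h : Perfect n) : σ 1 n = 2 * n := by
  rw [sigma_one_apply]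
  exact (perfect_iff_sum_divisors_eq_two_mul h.2).mp h

lemma Perfect.not_three_dvd_sigma_one {n : ℕ} (h : Perfect n) (h3 : ¬ 3 ∣ n) : ¬ 3 ∣ σ 1 n := by
  rw [h.sigma_one_eq]
  omega

lemma not_three_dvd_of_forall_prime_dvd_mod_three_eq_two {n : ℕ}
    (h : ∀ q, q.Prime → q ∣ n → q % 3 = 2) : ¬ 3 ∣ n :=
  fun h3 => by simpa using h 3 prime_three h3

lemma three_dvd_sigma_one_prime_pow {q a : ℕ} (hq : q.Prime) (hq3 : q % 3 = 2) (ha : Odd a) :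
    3 ∣ σ 1 (q ^ a) := by
  have hqp : (q : ZMod 3) = -1 := by
    rw [← ZMod.natCast_mod, hq3]
    rfl
  rw [sigma_one_apply_prime_pow hq, ← ZMod.natCast_eq_zero_iff]
  push_cast
  rw [hqp, neg_one_geom_sum, if_pos ha.add_one]

lemma odd_sigma_one_prime_pow {q a : ℕ} (hq : q.Prime) (hq2 : Odd q) (ha : Even a) :
    Odd (σ 1 (q ^ a)) := by
  rw [sigma_one_apply_prime_pow hq, ← ZMod.natCast_eq_one_iff_odd]
  push_cast
  rw [hq2.natCast_zmod_two]
  simp [(ZMod.natCast_eq_one_iff_odd).2 ha.add_one]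

lemma exists_odd_factorization_of_even_sigma_one {n : ℕ} (hn : Odd n) (hσ : Even (σ 1 n)) :
    ∃ q ∈ n.primeFactors, Odd (n.factorization q) := by
  by_contra! hall
  rw [isMultiplicative_sigma.multiplicative_factorization _ hn.pos.ne'] at hσ
  refine (not_even_iff_odd.2 ?_) hσ
  refine prod_induction _ Odd (fun _ _ => Odd.mul) odd_one fun q hq => ?_
  exact odd_sigma_one_prime_pow (prime_of_mem_primeFactors hq)
    (hn.of_dvd_nat (dvd_of_mem_primeFactors hq)) (not_odd_iff_even.1 (hall q hq))

end Nat

open Nat in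
/-- If `r = p^k · m²` is an odd perfect number in Eulerian form and all prime
divisors of `r` are `≡ 2 (mod 3)`, then `3 ∤ σ(p^k)·σ(m²)`; consequently no odd
perfect number has all of its prime factors `≡ 2 (mod 3)`. -/
theorem odd_perfect_eulerian_sigma_not_dvd_three :
    (∀ r p k m : ℕ, r = p ^ k * m ^ 2 → p.Prime → p % 4 = 1 → k % 4 = 1 →
        ¬ p ∣ m → 0 < m → Odd r → Nat.Perfect r →
        (∀ q : ℕ, q.Prime → q ∣ r → q % 3 = 2) →
        ¬ (3 ∣ (ArithmeticFunction.sigma 1) (p ^ k) * (ArithmeticFunction.sigma 1) (m ^ 2))) ∧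
      ¬ ∃ r : ℕ, 0 < r ∧ Odd r ∧ Nat.Perfect r ∧
          ∀ q : ℕ, q.Prime → q ∣ r → q % 3 = 2 := by
  refine ⟨?_, ?_⟩
  · rintro r p k m rfl hp - - hpm - - hperf hq
    rw [← isMultiplicative_sigma.map_mul_of_coprime ((hp.coprime_iff_not_dvd.2 hpm).pow k 2)]
    exact hperf.not_three_dvd_sigma_one (not_three_dvd_of_forall_prime_dvd_mod_three_eq_two hq)
  · rintro ⟨r, -, hodd, hperf, hq⟩
    obtain ⟨q, hqr, hexp⟩ :=
      exists_odd_factorization_of_even_sigma_one hodd (hperf.sigma_one_eq ▸ even_two_mul r)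
    have hqp := prime_of_mem_primeFactors hqr
    refine hperf.not_three_dvd_sigma_one (not_three_dvd_of_forall_prime_dvd_mod_three_eq_two hq) ?_
    exact (three_dvd_sigma_one_prime_pow hqp (hq q hqp (dvd_of_mem_primeFactors hqr)) hexp).trans
      (isMultiplicative_sigma.map_ordProj_dvd hqp hodd.pos.ne')
end

section
/- Suppose r = p^k m² is an odd perfect number in Eulerian form with p ≡ 5 (mod 8), where m = m₁m₂ with every prime factor of m₁ ≡ 5 (mod 8) and every prime factor of m₂ ≡ 7 (mod 8). Write m₁ = Π_{j=1}^{s} q_j^{α_j} and let L be the number of indices j with α_j odd. If k ≡ 1 (mod 8) then L is odd, and if k ≡ 5 (mod 8) then L is even. -/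
/-!
Since `p ≡ 5 (mod 8)` and `k = 2n + 1` is odd, `σ(p^k) = (1 + p)(1 + p² + ⋯ + p^{2n})` is twice a
number `≡ 3(n + 1) ≡ -(n + 1) (mod 4)`. Each `q_j ≡ 1 (mod 4)` contributes
`σ(q_j^{2α_j}) ≡ 2α_j + 1 ≡ (-1)^{α_j}`, and the primes of `m₂` are `≡ -1 (mod 4)` and occur to even
powers in `m₂²`, so `σ(m²) ≡ (-1)^L (mod 4)`. As `r ≡ 1 (mod 4)`, halving `σ(p^k) σ(m²) = 2r` gives
`(-1)^L ≡ -(n + 1) (mod 4)`, which is `-1` for `k ≡ 1` and `1` for `k ≡ 5 (mod 8)`.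
-/

open Finset ArithmeticFunction
open scoped ArithmeticFunction.sigma

lemma Nat.Perfect.sigma_one_eq_s15 {n : ℕ} (h : n.Perfect) : σ 1 n = 2 * n := by
  rw [sigma_one_apply, ← Nat.perfect_iff_sum_divisors_eq_two_mul h.2]
  exact h

lemma natCast_zmod_four_of_mod_eight_eq_five {t : ℕ} (h : t % 8 = 5) : (t : ZMod 4) = 1 := by
  rw [← ZMod.natCast_mod, show t % 4 = 1 by omega, Nat.cast_one]

lemma natCast_zmod_four_of_mod_eight_eq_seven {t : ℕ} (h : t % 8 = 7) : (t : ZMod 4) = -1 := by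
  rw [← ZMod.natCast_mod, show t % 4 = 3 by omega]
  rfl

lemma sq_natCast_zmod_four_of_odd {m : ℕ} (hm : Odd m) : (m : ZMod 4) ^ 2 = 1 := by
  obtain ⟨b, rfl⟩ := hm
  push_cast
  ring_nf
  reduce_mod_char

lemma natCast_sigma_one_prime_pow_of_natCast_eq_one {n t : ℕ} (ht : t.Prime)
    (h : (t : ZMod n) = 1) (e : ℕ) : (σ 1 (t ^ e) : ZMod n) = e + 1 := by
  simp [sigma_one_apply_prime_pow ht, h]

lemma natCast_sigma_one_prime_pow_of_natCast_eq_neg_one {n t e : ℕ} (ht : t.Prime)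
    (h : (t : ZMod n) = -1) (he : Even e) : (σ 1 (t ^ e) : ZMod n) = 1 := by
  simp [sigma_one_apply_prime_pow ht, h, neg_one_geom_sum, Nat.even_add_one, he]

lemma two_mul_add_one_eq_neg_one_pow (a : ℕ) : (2 * a + 1 : ZMod 4) = (-1) ^ a := by
  obtain ⟨b, rfl | rfl⟩ := Nat.even_or_odd' a <;>
  · push_cast [pow_succ, pow_mul]
    ring_nf
    reduce_mod_char

lemma natCast_sigma_one_prod_pow_sq {ι : Type*} [Fintype ι] {q α : ι → ℕ}
    (hq : ∀ j, (q j).Prime) (hinj : Function.Injective q) (h : ∀ j, (q j : ZMod 4) = 1) :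
    (σ 1 ((∏ j, q j ^ α j) ^ 2) : ZMod 4) = (-1) ^ #{j | Odd (α j)} := by
  have hcop : ∀ i ∈ (univ : Finset ι), ∀ j ∈ univ, i ≠ j →
      (q i ^ (2 * α i)).Coprime (q j ^ (2 * α j)) := fun i _ j _ hij =>
    ((Nat.coprime_primes (hq i) (hq j)).mpr (hinj.ne hij)).pow _ _
  simp_rw [← prod_pow, ← pow_mul, mul_comm (α _)]
  rw [isMultiplicative_sigma.map_prod _ _ hcop, Nat.cast_prod, ← prod_const, prod_filter]
  refine prod_congr rfl fun j _ => ?_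
  rw [natCast_sigma_one_prime_pow_of_natCast_eq_one (hq j) (h j), Nat.cast_mul, Nat.cast_ofNat,
    two_mul_add_one_eq_neg_one_pow, neg_one_pow_eq_ite]
  simp only [← Nat.not_odd_iff_even, ite_not]

lemma natCast_sigma_one_sq_of_forall_prime_dvd {n k : ℕ} (hk : k ≠ 0)
    (h : ∀ t, t.Prime → t ∣ k → (t : ZMod n) = -1) : (σ 1 (k ^ 2) : ZMod n) = 1 := by
  rw [isMultiplicative_sigma.multiplicative_factorization _ (pow_ne_zero 2 hk), Finsupp.prod,
    Nat.cast_prod, Nat.support_factorization, Nat.primeFactors_pow _ two_ne_zero]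
  refine prod_eq_one fun t ht => ?_
  have htp := Nat.prime_of_mem_primeFactors ht
  rw [Nat.factorization_pow]
  exact natCast_sigma_one_prime_pow_of_natCast_eq_neg_one htp
    (h t htp (Nat.dvd_of_mem_primeFactors ht)) (even_two_mul _)

lemma natCast_sigma_one_sq_prod_pow_mul {ι : Type*} [Fintype ι] {q α : ι → ℕ} {n : ℕ}
    (hq : ∀ j, (q j).Prime) (hinj : Function.Injective q) (hq4 : ∀ j, (q j : ZMod 4) = 1)
    (hn : n ≠ 0) (hn4 : ∀ t, t.Prime → t ∣ n → (t : ZMod 4) = -1)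
    (hcop : (∏ j, q j ^ α j).Coprime n) :
    (σ 1 (((∏ j, q j ^ α j) * n) ^ 2) : ZMod 4) = (-1) ^ #{j | Odd (α j)} := by
  rw [mul_pow, isMultiplicative_sigma.map_mul_of_coprime (hcop.pow 2 2), Nat.cast_mul,
    natCast_sigma_one_prod_pow_sq hq hinj hq4, natCast_sigma_one_sq_of_forall_prime_dvd hn hn4,
    mul_one]

lemma geom_sum_two_mul {R : Type*} [CommSemiring R] (x : R) (n : ℕ) :
    ∑ i ∈ range (2 * n), x ^ i = (1 + x) * ∑ i ∈ range n, (x ^ 2) ^ i := by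
  induction n with
  | zero => simp
  | succ n ih =>
    rw [mul_add_one, sum_range_succ, sum_range_succ, ih, sum_range_succ]
    ring

lemma exists_sigma_one_prime_pow_eq_two_mul {p : ℕ} (hp : p.Prime) (hp8 : p % 8 = 5) (n : ℕ) :
    ∃ a, σ 1 (p ^ (2 * n + 1)) = 2 * a ∧ (a : ZMod 4) = -((n + 1 : ℕ) : ZMod 4) := by
  refine ⟨(p + 1) / 2 * ∑ i ∈ range (n + 1), (p ^ 2) ^ i, ?_, ?_⟩
  · rw [sigma_one_apply_prime_pow hp, show 2 * n + 1 + 1 = 2 * (n + 1) by ring, geom_sum_two_mul,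
      ← mul_assoc, show 1 + p = 2 * ((p + 1) / 2) by omega]
  · have half : (((p + 1) / 2 : ℕ) : ZMod 4) = -1 := by
      rw [← ZMod.natCast_mod, show (p + 1) / 2 % 4 = 3 by omega]
      rfl
    push_cast
    rw [half, natCast_zmod_four_of_mod_eight_eq_five hp8]
    simp

lemma natCast_eq_neg_of_sigma_one_prime_pow_mul_eq_two_mul {p n x r : ℕ} (hp : p.Prime)
    (hp8 : p % 8 = 5) (h : σ 1 (p ^ (2 * n + 1)) * x = 2 * r) (hr : (r : ZMod 4) = 1) :
    (x : ZMod 4) = -((n + 1 : ℕ) : ZMod 4) := by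
  obtain ⟨a, ha, ha4⟩ := exists_sigma_one_prime_pow_eq_two_mul hp hp8 n
  have hax : (a : ZMod 4) * x = 1 := by
    rw [← hr, ← Nat.cast_mul]
    congr 1
    rw [ha] at h
    linarith
  rw [← ha4]
  -- a unit of `ZMod 4` is its own inverse
  exact (by decide : ∀ a x : ZMod 4, a * x = 1 → x = a) _ _ hax

theorem odd_perfect_parity_of_L_general (r p k m m₁ m₂ s : ℕ) (q α : Fin s → ℕ)
    (hr : r = p ^ k * m ^ 2) (hp : p.Prime)
    (hpm : ¬ p ∣ m) (hodd : Odd r) (hperf : Nat.Perfect r) (hp8 : p % 8 = 5)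
    (hm : m = m₁ * m₂)
    (hm₁ : ∀ t : ℕ, t.Prime → t ∣ m₁ → t % 8 = 5)
    (hm₂ : ∀ t : ℕ, t.Prime → t ∣ m₂ → t % 8 = 7)
    (hq : ∀ j, (q j).Prime) (hqinj : Function.Injective q)
    (hα : ∀ j, 0 < α j) (hfact : m₁ = ∏ j, q j ^ α j) :
    (k % 8 = 1 → Odd (Finset.univ.filter (fun j => Odd (α j))).card) ∧
      (k % 8 = 5 → Even (Finset.univ.filter (fun j => Odd (α j))).card) := by
  have hm_odd : Odd m :=
    hodd.of_dvd_nat ((dvd_pow_self m two_ne_zero).trans (Dvd.intro_left _ hr.symm))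
  have hq4 : ∀ j, (q j : ZMod 4) = 1 := fun j => natCast_zmod_four_of_mod_eight_eq_five <|
    hm₁ _ (hq j) (hfact ▸ (dvd_pow_self _ (hα j).ne').trans (dvd_prod_of_mem _ (mem_univ j)))
  have hm₁₂ : m₁.Coprime m₂ := Nat.coprime_of_dvd fun t ht h₁ h₂ => by
    have := hm₁ t ht h₁; have := hm₂ t ht h₂; omega
  have hσm : (σ 1 (m ^ 2) : ZMod 4) = (-1) ^ #{j | Odd (α j)} := by
    rw [hm, hfact]
    exact natCast_sigma_one_sq_prod_pow_mul hq hqinj hq4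
      (right_ne_zero_of_mul (hm ▸ hm_odd.pos.ne'))
      (fun t ht htm => natCast_zmod_four_of_mod_eight_eq_seven (hm₂ t ht htm)) (hfact ▸ hm₁₂)
  have hσ : σ 1 (p ^ k) * σ 1 (m ^ 2) = 2 * r := by
    rw [← hperf.sigma_one_eq_s15, hr,
      isMultiplicative_sigma.map_mul_of_coprime ((hp.coprime_iff_not_dvd.mpr hpm).pow k 2)]
  have hr4 : (r : ZMod 4) = 1 := by
    rw [hr, Nat.cast_mul, Nat.cast_pow, Nat.cast_pow, natCast_zmod_four_of_mod_eight_eq_five hp8,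
      sq_natCast_zmod_four_of_odd hm_odd, one_pow, one_mul]
  have hsign : ∀ n, k = 2 * n + 1 → (-1 : ZMod 4) ^ #{j | Odd (α j)} = -((n + 1 : ℕ) : ZMod 4) := by
    rintro n rfl
    exact hσm ▸ natCast_eq_neg_of_sigma_one_prime_pow_mul_eq_two_mul hp hp8 hσ hr4
  refine ⟨fun hk8 => ?_, fun hk8 => ?_⟩
  · have h := hsign (k / 2) (by omega)
    rw [← ZMod.natCast_mod, show (k / 2 + 1) % 4 = 1 by omega, Nat.cast_one] at h
    exact (neg_one_pow_eq_neg_one_iff_odd (by decide)).mp h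
  · have h := hsign (k / 2) (by omega)
    rw [← ZMod.natCast_mod, show (k / 2 + 1) % 4 = 3 by omega] at h
    exact (neg_one_pow_eq_one_iff_even (by decide)).mp (h.trans (by decide))

/-- Let `r = p^k m²` be an odd perfect number in Eulerian form with `p ≡ 5 (mod 8)`,
where `m = m₁m₂`, every prime factor of `m₁` is `≡ 5 (mod 8)` and every prime factor
of `m₂` is `≡ 7 (mod 8)`. Writing `m₁ = Π q_j^{α_j}` (distinct primes `q_j`,
`α_j ≥ 1`) and letting `L` be the number of indices with `α_j` odd: if
`k ≡ 1 (mod 8)` then `L` is odd, and if `k ≡ 5 (mod 8)` then `L` is even. -/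
theorem odd_perfect_parity_of_L (r p k m m₁ m₂ s : ℕ) (q α : Fin s → ℕ)
    (hr : r = p ^ k * m ^ 2) (hp : p.Prime) (hp4 : p % 4 = 1) (hk4 : k % 4 = 1)
    (hpm : ¬ p ∣ m) (hodd : Odd r) (hperf : Nat.Perfect r) (hp8 : p % 8 = 5)
    (hm : m = m₁ * m₂)
    (hm₁ : ∀ t : ℕ, t.Prime → t ∣ m₁ → t % 8 = 5)
    (hm₂ : ∀ t : ℕ, t.Prime → t ∣ m₂ → t % 8 = 7)
    (hq : ∀ j, (q j).Prime) (hqinj : Function.Injective q)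
    (hα : ∀ j, 0 < α j) (hfact : m₁ = ∏ j, q j ^ α j) :
    (k % 8 = 1 → Odd (Finset.univ.filter (fun j => Odd (α j))).card) ∧
      (k % 8 = 5 → Even (Finset.univ.filter (fun j => Odd (α j))).card) :=
  odd_perfect_parity_of_L_general r p k m m₁ m₂ s q α hr hp hpm hodd hperf hp8 hm hm₁ hm₂ hq hqinj
    hα hfact
end
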